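/- Let κ be a finite field with q elements. For any multiplicative characters α, β, γ and any x, y ∈ κ with xy ≠ 0, the degenerate Kampé de Fériet sum satisfies F^{2:0:0}_{1:0:0}(α,γ;β | x,y) := (1/(1-q)²)∑_{ν,μ}((α)_{νμ}(γ)_{νμ}/((β)°_{νμ}(ε)°_ν(ε)°_μ))ν(x)μ(y) = ₂F₁(α,γ;β; x+y) + δ(x+y), where δ(x+y)=1 if x+y=0 and 0 otherwise. -/

import Mathlib

open scoped BigOperators

namespace KdF

variable {κ : Type*} [Field κ] [Fintype κ] [DecidableEq κ]

noncomputable instance : Fintype (MulChar κ ℂ) := Fintype.ofFinite _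

/-- The Gauss sum `g(φ) = -∑ φ(x) ψ(x)`. -/
noncomputable def g (ψ : AddChar κ ℂ) (φ : MulChar κ ℂ) : ℂ :=
  -∑ x : κ, φ x * ψ x

/-- The variant `g°(φ) = q^{δ(φ)} g(φ)`. -/
noncomputable def gc (ψ : AddChar κ ℂ) (φ : MulChar κ ℂ) : ℂ :=
  (if φ = 1 then (Fintype.card κ : ℂ) else 1) * g ψ φ

/-- Finite-field Pochhammer symbol `(α)_ν = g(αν)/g(α)`. -/
noncomputable def poch (ψ : AddChar κ ℂ) (α ν : MulChar κ ℂ) : ℂ :=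
  g ψ (α * ν) / g ψ α

/-- Variant Pochhammer symbol `(α)°_ν = g°(αν)/g°(α)`. -/
noncomputable def pochc (ψ : AddChar κ ℂ) (α ν : MulChar κ ℂ) : ℂ :=
  gc ψ (α * ν) / gc ψ α

/-- `₁F₀(μ; x)` over the finite field `κ`. -/
noncomputable def F10 (ψ : AddChar κ ℂ) (μ : MulChar κ ℂ) (x : κ) : ℂ :=
  (1 / (1 - (Fintype.card κ : ℂ))) *
    ∑ ν : MulChar κ ℂ, poch ψ μ ν / pochc ψ 1 ν * ν x

/-- `₂F₁(α, β; γ; x)` over the finite field `κ`. -/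
noncomputable def F21 (ψ : AddChar κ ℂ) (α β γ : MulChar κ ℂ) (x : κ) : ℂ :=
  (1 / (1 - (Fintype.card κ : ℂ))) *
    ∑ ν : MulChar κ ℂ,
      poch ψ α ν * poch ψ β ν / (pochc ψ γ ν * pochc ψ 1 ν) * ν x

/-- `₃F₂(α, β, γ; φ, ρ; x)` over the finite field `κ`. -/
noncomputable def F32 (ψ : AddChar κ ℂ) (α β γ φ ρ : MulChar κ ℂ) (x : κ) : ℂ :=
  (1 / (1 - (Fintype.card κ : ℂ))) *
    ∑ ν : MulChar κ ℂ,
      poch ψ α ν * poch ψ β ν * poch ψ γ ν /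
        (pochc ψ φ ν * pochc ψ ρ ν * pochc ψ 1 ν) * ν x

end KdF

open KdF

namespace KdFAux

variable {κ : Type*} [Field κ] [Fintype κ] [DecidableEq κ]

set_option linter.unusedSectionVars false

lemma hq1 : (Fintype.card κ : ℂ) ≠ 1 := by
  have h := Fintype.one_lt_card (α := κ)
  exact_mod_cast h.ne'

lemma hq0 : (Fintype.card κ : ℂ) ≠ 0 := by
  exact_mod_cast Fintype.card_ne_zero

lemma homq : (1 : ℂ) - (Fintype.card κ : ℂ) ≠ 0 := by
  intro h
  exact hq1 (by linear_combination -h)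

variable (ψ : AddChar κ ℂ)

lemma g_one (hψ : ψ ≠ 1) : g ψ (1 : MulChar κ ℂ) = 1 := by
  have hsum : ∑ u : κ, ψ u = 0 := AddChar.sum_eq_zero_iff_ne_zero.mpr hψ
  have key : ∀ u : κ, (1 : MulChar κ ℂ) u * ψ u = ψ u - (if u = 0 then 1 else 0) := by
    intro u
    by_cases h : u = 0
    · simp [h, MulChar.map_nonunit _ (by simp : ¬ IsUnit (0:κ))]
    · simp [h, MulChar.one_apply (isUnit_iff_ne_zero.mpr h)]
  simp only [g, key, Finset.sum_sub_distrib, hsum, Finset.sum_ite_eq' Finset.univ (0:κ)]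
  simp

lemma gausseq (φ : MulChar κ ℂ) : g ψ φ = -gaussSum φ ψ := rfl

lemma g_mul_g (hψ : ψ ≠ 1) (ν : MulChar κ ℂ) (hν : ν ≠ 1) :
    g ψ ν * (ν (-1) * g ψ ν⁻¹) = (Fintype.card κ : ℂ) := by
  have hprim : ψ.IsPrimitive := AddChar.IsPrimitive.of_ne_one hψ
  have h := gaussSum_mul_gaussSum_eq_card hν hprim
  have h2 : ν⁻¹ (-1) * gaussSum ν⁻¹ ψ = gaussSum ν⁻¹ ψ⁻¹ := by
    have := mul_gaussSum_inv_eq_gaussSum ν⁻¹ ψ⁻¹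
    rwa [inv_inv] at this
  have h3 : ν⁻¹ (-1:κ) = ν (-1) := by
    rw [MulChar.inv_apply' ν (-1)]; norm_num
  rw [gausseq, gausseq, neg_mul, mul_neg, mul_neg, neg_neg, ← h3, mul_left_comm,
    ← mul_assoc, mul_comm (ν⁻¹ (-1:κ)) (gaussSum ν ψ), mul_assoc, h2, h]

lemma gc_mul (hψ : ψ ≠ 1) (ν : MulChar κ ℂ) :
    gc ψ ν * (ν (-1) * g ψ ν⁻¹) = (Fintype.card κ : ℂ) := by
  by_cases hν : ν = 1
  · subst hν
    simp [gc, g_one ψ hψ, MulChar.one_apply (by norm_num : IsUnit (-1:κ))]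
  · rw [gc, if_neg hν, one_mul, g_mul_g ψ hψ ν hν]

lemma gc_ne_zero (hψ : ψ ≠ 1) (ν : MulChar κ ℂ) : gc ψ ν ≠ 0 := by
  intro h
  apply hq0 (κ := κ)
  rw [← gc_mul ψ hψ ν, h, zero_mul]

lemma g_ne_zero (hψ : ψ ≠ 1) (ν : MulChar κ ℂ) : g ψ ν ≠ 0 := by
  intro h
  apply gc_ne_zero ψ hψ ν
  rw [gc, h, mul_zero]

lemma gc_one (hψ : ψ ≠ 1) : gc ψ (1 : MulChar κ ℂ) = (Fintype.card κ : ℂ) := by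
  simp [gc, g_one ψ hψ]

lemma pochc_one_ne_zero (hψ : ψ ≠ 1) (δ ν : MulChar κ ℂ) : pochc ψ δ ν ≠ 0 :=
  div_ne_zero (gc_ne_zero ψ hψ _) (gc_ne_zero ψ hψ _)

lemma poch_apply_one (hψ : ψ ≠ 1) (δ : MulChar κ ℂ) : poch ψ δ 1 = 1 := by
  rw [poch, mul_one, div_self (g_ne_zero ψ hψ δ)]

lemma pochc_apply_one (hψ : ψ ≠ 1) (δ : MulChar κ ℂ) : pochc ψ δ 1 = 1 := by
  rw [pochc, mul_one, div_self (gc_ne_zero ψ hψ δ)]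

lemma inv_pochc (hψ : ψ ≠ 1) (ν : MulChar κ ℂ) :
    (pochc ψ 1 ν)⁻¹ = (ν (-1) * g ψ ν⁻¹) := by
  have h := gc_mul ψ hψ ν
  rw [pochc, one_mul, gc_one ψ hψ, inv_div, div_eq_iff (gc_ne_zero ψ hψ ν)]
  linear_combination -h

/-- orthogonality over characters -/
lemma sum_chars (a : κ) :
    ∑ χ : MulChar κ ℂ, χ a = if a = 1 then ((Fintype.card κ : ℂ) - 1) else 0 := by
  haveI : NeZero ((Monoid.exponent κˣ : ℂ)) :=
    ⟨by exact_mod_cast Monoid.exponent_ne_zero_of_finite⟩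
  by_cases ha : a = 1
  · subst ha
    simp only [map_one, if_pos rfl, Finset.sum_const, Finset.card_univ, nsmul_eq_mul, mul_one]
    have hcard : Fintype.card (MulChar κ ℂ) = Fintype.card κ - 1 := by
      have h1 : Nat.card (MulChar κ ℂ) = Nat.card κˣ :=
        MulChar.card_eq_card_units_of_hasEnoughRootsOfUnity κ ℂ
      rw [Nat.card_eq_fintype_card, Nat.card_eq_fintype_card] at h1
      rw [h1, Fintype.card_units]
    rw [hcard]
    have h2 : 1 ≤ Fintype.card κ := Fintype.card_pos
    push_cast [Nat.cast_sub h2]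
    ring
  · rw [if_neg ha]
    by_cases hu : IsUnit a
    · obtain ⟨χ₀, hχ₀⟩ := MulChar.exists_apply_ne_one_of_hasEnoughRootsOfUnity κ ℂ ha
      refine eq_zero_of_mul_eq_self_left hχ₀ ?_
      rw [Finset.mul_sum]
      simp only [← MulChar.mul_apply]
      exact Fintype.sum_bijective _ (Group.mulLeft_bijective χ₀) _ _ fun χ' ↦ rfl
    · exact Finset.sum_eq_zero fun χ _ => MulChar.map_nonunit χ hu

/-- orthogonality over values -/
lemma sum_vals (lam : MulChar κ ℂ) :
    ∑ w : κ, lam w = if lam = 1 then ((Fintype.card κ : ℂ) - 1) else 0 := by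
  by_cases hl : lam = 1
  · subst hl
    rw [if_pos rfl]
    have key : ∀ w : κ, (1 : MulChar κ ℂ) w = 1 - (if w = 0 then 1 else 0) := by
      intro w
      by_cases h : w = 0
      · simp [h, MulChar.map_nonunit _ (by simp : ¬ IsUnit (0:κ))]
      · simp [h, MulChar.one_apply (isUnit_iff_ne_zero.mpr h)]
    simp only [key, Finset.sum_sub_distrib, Finset.sum_const, Finset.card_univ,
      Finset.sum_ite_eq' Finset.univ (0:κ)]
    simp
  · rw [if_neg hl]
    exact MulChar.sum_eq_zero_of_ne_one hl


lemma expand (hψ : ψ ≠ 1) (ν : MulChar κ ℂ) (t : κ) :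
    ν t * (pochc ψ 1 ν)⁻¹ = -∑ u : κ, ν (-t * u⁻¹) * ψ u := by
  rw [inv_pochc ψ hψ ν, g, mul_neg, mul_neg, neg_inj, Finset.mul_sum, Finset.mul_sum]
  refine Finset.sum_congr rfl fun u _ => ?_
  rw [MulChar.inv_apply' ν u, show (-t * u⁻¹ : κ) = t * (-1) * u⁻¹ by ring, map_mul, map_mul]
  ring

lemma charsum2 (f : MulChar κ ℂ → ℂ) (s t : κ) :
    ∑ ν : MulChar κ ℂ, ∑ μ : MulChar κ ℂ, f (ν * μ) * ν s * μ t
      = (if s = t then ((Fintype.card κ : ℂ) - 1) else 0)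
          * ∑ lam : MulChar κ ℂ, f lam * lam t := by
  have step1 : ∀ ν : MulChar κ ℂ, (∑ μ : MulChar κ ℂ, f (ν * μ) * ν s * μ t)
      = ∑ lam : MulChar κ ℂ, f lam * ν s * (ν⁻¹ * lam) t := by
    intro ν
    refine Fintype.sum_bijective (fun μ => ν * μ) (Group.mulLeft_bijective ν) _ _ fun μ => ?_
    rw [inv_mul_cancel_left]
  simp only [step1]
  rw [Finset.sum_comm]
  have step2 : ∀ lam ν : MulChar κ ℂ, f lam * ν s * (ν⁻¹ * lam) t
      = f lam * lam t * ν (s * t⁻¹) := by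
    intro lam ν
    rw [MulChar.mul_apply, MulChar.inv_apply' ν t, map_mul]
    ring
  simp only [step2, ← Finset.mul_sum, sum_chars]
  rw [Finset.mul_sum]
  refine Finset.sum_congr rfl fun lam _ => ?_
  by_cases ht : t = 0
  · simp [ht, MulChar.map_nonunit lam (by simp : ¬ IsUnit (0:κ))]
  · rw [if_congr (mul_inv_eq_one₀ ht) rfl rfl]
    ring


end KdFAux

open KdFAux

theorem stmt {κ : Type*} [Field κ] [Fintype κ] [DecidableEq κ]
    (ψ : AddChar κ ℂ) (hψ : ψ ≠ 1) (α β γ : MulChar κ ℂ)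
    (x y : κ) (hxy : x * y ≠ 0) :
    (1 / (1 - (Fintype.card κ : ℂ)) ^ 2) *
      ∑ ν : MulChar κ ℂ, ∑ μ : MulChar κ ℂ,
        poch ψ α (ν * μ) * poch ψ γ (ν * μ) /
          (pochc ψ β (ν * μ) * pochc ψ 1 ν * pochc ψ 1 μ) * ν x * μ y =
      F21 ψ α γ β (x + y) + (if x + y = 0 then 1 else 0) := by
  classical
  have hx : x ≠ 0 := left_ne_zero_of_mul hxy
  have hy : y ≠ 0 := right_ne_zero_of_mul hxy
  set q : ℂ := (Fintype.card κ : ℂ) with hqdef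
  set f : MulChar κ ℂ → ℂ :=
    fun lam => poch ψ α lam * poch ψ γ lam / pochc ψ β lam with hf
  set T : κ → ℂ := fun t => ∑ lam : MulChar κ ℂ, f lam * lam t with hT
  -- Step 1 & 2: termwise rewriting and expansion of the Gauss-sum inverses
  have step12 : ∀ ν μ : MulChar κ ℂ,
      poch ψ α (ν * μ) * poch ψ γ (ν * μ) /
          (pochc ψ β (ν * μ) * pochc ψ 1 ν * pochc ψ 1 μ) * ν x * μ y
      = (-∑ u : κ, ν (-x * u⁻¹) * ψ u) * (-∑ v : κ, μ (-y * v⁻¹) * ψ v) * f (ν * μ) := by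
    intro ν μ
    rw [← expand ψ hψ ν x, ← expand ψ hψ μ y, hf]
    simp only
    rw [div_eq_mul_inv, div_eq_mul_inv, mul_inv, mul_inv]
    ring
  -- expand the products of sums
  have step3 : ∀ ν μ : MulChar κ ℂ,
      (-∑ u : κ, ν (-x * u⁻¹) * ψ u) * (-∑ v : κ, μ (-y * v⁻¹) * ψ v) * f (ν * μ)
      = ∑ u : κ, ∑ v : κ,
          f (ν * μ) * ν (-x * u⁻¹) * μ (-y * v⁻¹) * (ψ u * ψ v) := by
    intro ν μ
    rw [neg_mul_neg, Finset.sum_mul_sum, Finset.sum_mul]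
    refine Finset.sum_congr rfl fun u _ => ?_
    rw [Finset.sum_mul]
    refine Finset.sum_congr rfl fun v _ => ?_
    ring
  have main : (∑ ν : MulChar κ ℂ, ∑ μ : MulChar κ ℂ,
        poch ψ α (ν * μ) * poch ψ γ (ν * μ) /
          (pochc ψ β (ν * μ) * pochc ψ 1 ν * pochc ψ 1 μ) * ν x * μ y)
      = ∑ u : κ, (q - 1) * T (-x * u⁻¹) * ψ (u * ((x + y) * x⁻¹)) := by
    simp only [step12, step3]
    -- swap the sums
    have swap : (∑ ν : MulChar κ ℂ, ∑ μ : MulChar κ ℂ, ∑ u : κ, ∑ v : κ,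
          f (ν * μ) * ν (-x * u⁻¹) * μ (-y * v⁻¹) * (ψ u * ψ v))
        = ∑ u : κ, ∑ v : κ, ∑ ν : MulChar κ ℂ, ∑ μ : MulChar κ ℂ,
          f (ν * μ) * ν (-x * u⁻¹) * μ (-y * v⁻¹) * (ψ u * ψ v) := by
      calc (∑ ν : MulChar κ ℂ, ∑ μ : MulChar κ ℂ, ∑ u : κ, ∑ v : κ,
          f (ν * μ) * ν (-x * u⁻¹) * μ (-y * v⁻¹) * (ψ u * ψ v))
          = ∑ ν : MulChar κ ℂ, ∑ u : κ, ∑ μ : MulChar κ ℂ, ∑ v : κ,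
            f (ν * μ) * ν (-x * u⁻¹) * μ (-y * v⁻¹) * (ψ u * ψ v) :=
            Finset.sum_congr rfl fun ν _ => Finset.sum_comm
        _ = ∑ u : κ, ∑ ν : MulChar κ ℂ, ∑ μ : MulChar κ ℂ, ∑ v : κ,
            f (ν * μ) * ν (-x * u⁻¹) * μ (-y * v⁻¹) * (ψ u * ψ v) := Finset.sum_comm
        _ = ∑ u : κ, ∑ ν : MulChar κ ℂ, ∑ v : κ, ∑ μ : MulChar κ ℂ,
            f (ν * μ) * ν (-x * u⁻¹) * μ (-y * v⁻¹) * (ψ u * ψ v) :=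
            Finset.sum_congr rfl fun u _ => Finset.sum_congr rfl fun ν _ => Finset.sum_comm
        _ = ∑ u : κ, ∑ v : κ, ∑ ν : MulChar κ ℂ, ∑ μ : MulChar κ ℂ,
            f (ν * μ) * ν (-x * u⁻¹) * μ (-y * v⁻¹) * (ψ u * ψ v) :=
            Finset.sum_congr rfl fun u _ => Finset.sum_comm
    rw [swap]
    -- inner double character sum
    have inner : ∀ u v : κ,
        (∑ ν : MulChar κ ℂ, ∑ μ : MulChar κ ℂ,
          f (ν * μ) * ν (-x * u⁻¹) * μ (-y * v⁻¹) * (ψ u * ψ v))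
        = ((if (-x * u⁻¹ : κ) = -y * v⁻¹ then (q - 1) else 0) * T (-y * v⁻¹))
            * (ψ u * ψ v) := by
      intro u v
      rw [← charsum2 f (-x * u⁻¹) (-y * v⁻¹), Finset.sum_mul]
      refine Finset.sum_congr rfl fun ν _ => ?_
      rw [Finset.sum_mul]
    simp only [inner]
    -- collapse the v-sum
    refine Finset.sum_congr rfl fun u _ => ?_
    have hcond : ∀ v : κ, ((-x * u⁻¹ : κ) = -y * v⁻¹) ↔ v = y * x⁻¹ * u := by
      intro v
      constructor
      · intro h
        rw [neg_mul, neg_mul, neg_inj] at h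
        have h2 : v⁻¹ = y⁻¹ * (x * u⁻¹) := by
          rw [h, ← mul_assoc, inv_mul_cancel₀ hy, one_mul]
        have h3 : v = (y⁻¹ * (x * u⁻¹))⁻¹ := by rw [← h2, inv_inv]
        rw [h3, mul_inv, mul_inv, inv_inv, inv_inv]
        ring
      · intro h
        subst h
        by_cases hu : u = 0
        · simp [hu]
        · field_simp
    have hterm : ∀ v : κ,
        ((if (-x * u⁻¹ : κ) = -y * v⁻¹ then (q - 1) else 0) * T (-y * v⁻¹))
            * (ψ u * ψ v)
        = if v = y * x⁻¹ * u
            then (q - 1) * T (-y * v⁻¹) * (ψ u * ψ v) else 0 := by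
      intro v
      rw [if_congr (hcond v) rfl rfl]
      by_cases h : v = y * x⁻¹ * u <;> simp [h]
    rw [Finset.sum_congr rfl fun v _ => hterm v, Finset.sum_ite_eq' Finset.univ (y * x⁻¹ * u)]
    rw [if_pos (Finset.mem_univ _)]
    have e1 : (-y * (y * x⁻¹ * u)⁻¹ : κ) = -x * u⁻¹ := by
      by_cases hu : u = 0
      · simp [hu]
      · field_simp
    have e2 : ψ u * ψ (y * x⁻¹ * u) = ψ (u * ((x + y) * x⁻¹)) := by
      rw [← AddChar.map_add_eq_mul]
      congr 1
      field_simp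
    rw [e1, e2]
  rw [main]
  by_cases hsum : x + y = 0
  · -- the degenerate case
    rw [if_pos hsum, hsum]
    have e0 : ∀ u : κ, ψ (u * ((0:κ) * x⁻¹)) = 1 := by
      intro u; rw [zero_mul, mul_zero, AddChar.map_zero_eq_one]
    simp only [e0, mul_one]
    have hTv : ∀ u : κ, T (-x * u⁻¹) = ∑ lam : MulChar κ ℂ, f lam * lam (-x * u⁻¹) := fun u => rfl
    have hSum : (∑ u : κ, (q - 1) * T (-x * u⁻¹)) = (q - 1) * (q - 1) := by
      rw [← Finset.mul_sum]
      congr 1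
      have swap2 : (∑ u : κ, T (-x * u⁻¹))
          = ∑ lam : MulChar κ ℂ, f lam * ∑ u : κ, lam (-x * u⁻¹) := by
        simp only [hTv]
        rw [Finset.sum_comm]
        exact Finset.sum_congr rfl fun lam _ => by rw [Finset.mul_sum]
      rw [swap2]
      have hbij : Function.Bijective (fun u : κ => -x * u⁻¹) := by
        have hinv : Function.Involutive (fun u : κ => -x * u⁻¹) := by
          intro u
          simp only
          rw [mul_inv, inv_inv, ← mul_assoc, mul_inv_cancel₀ (neg_ne_zero.mpr hx), one_mul]
        exact hinv.bijective
      have hval : ∀ lam : MulChar κ ℂ, (∑ u : κ, lam (-x * u⁻¹)) = ∑ w : κ, lam w :=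
        fun lam => Fintype.sum_bijective _ hbij _ _ fun u => rfl
      simp only [hval, sum_vals]
      rw [Finset.sum_congr rfl fun lam _ => (by
        by_cases h : lam = 1 <;> simp [h] :
          f lam * (if lam = 1 then ((Fintype.card κ : ℂ) - 1) else 0)
            = if lam = 1 then f lam * ((Fintype.card κ : ℂ) - 1) else 0),
        Finset.sum_ite_eq' Finset.univ (1 : MulChar κ ℂ), if_pos (Finset.mem_univ _)]
      have hf1 : f 1 = 1 := by
        rw [hf]
        simp only
        rw [poch_apply_one ψ hψ, poch_apply_one ψ hψ, pochc_apply_one ψ hψ]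
        norm_num
      rw [hf1, one_mul]
    rw [hSum]
    have hF0 : F21 ψ α γ β 0 = 0 := by
      rw [F21]
      have : ∀ ν : MulChar κ ℂ,
          poch ψ α ν * poch ψ γ ν / (pochc ψ β ν * pochc ψ 1 ν) * ν 0 = 0 := by
        intro ν
        rw [MulChar.map_zero, mul_zero]
      rw [Finset.sum_congr rfl fun ν _ => this ν]
      simp
    rw [hF0, zero_add]
    have h1q : ((1 : ℂ) - q) ≠ 0 := homq
    field_simp
    ring
  · -- the generic case
    rw [if_neg hsum, add_zero]
    have hs0 : ((x + y) * x⁻¹ : κ) ≠ 0 := mul_ne_zero hsum (inv_ne_zero hx)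
    have hc0 : (x * (x + y)⁻¹ : κ) ≠ 0 := mul_ne_zero hx (inv_ne_zero hsum)
    -- reindex u = x(x+y)⁻¹ r
    have reidx : (∑ u : κ, (q - 1) * T (-x * u⁻¹) * ψ (u * ((x + y) * x⁻¹)))
        = ∑ r : κ, (q - 1) * T (-(x + y) * r⁻¹) * ψ r := by
      refine (Fintype.sum_bijective (fun r : κ => x * (x + y)⁻¹ * r)
        (mulLeft_bijective₀ _ hc0) _ _ fun r => ?_).symm
      have e1 : (-x * (x * (x + y)⁻¹ * r)⁻¹ : κ) = -(x + y) * r⁻¹ := by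
        by_cases hr : r = 0
        · simp [hr]
        · field_simp
      have e2 : ((x * (x + y)⁻¹ * r) * ((x + y) * x⁻¹) : κ) = r := by
        field_simp
      rw [e1, e2]
    rw [reidx]
    have swap3 : (∑ r : κ, (q - 1) * T (-(x + y) * r⁻¹) * ψ r)
        = (q - 1) * ∑ lam : MulChar κ ℂ,
            f lam * (lam (-1) * g ψ lam⁻¹) * lam (x + y) * (-1) := by
      have hTr : ∀ r : κ, (q - 1) * T (-(x + y) * r⁻¹) * ψ r
          = (q - 1) * ∑ lam : MulChar κ ℂ,
              f lam * lam (-(x + y) * r⁻¹) * ψ r := by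
        intro r
        rw [hT]
        simp only
        rw [mul_assoc, Finset.sum_mul]
      simp only [hTr]
      rw [← Finset.mul_sum, Finset.sum_comm]
      congr 1
      refine Finset.sum_congr rfl fun lam _ => ?_
      have hlam : ∀ r : κ, f lam * lam (-(x + y) * r⁻¹) * ψ r
          = f lam * (lam (-1) * lam (x + y)) * (lam⁻¹ r * ψ r) := by
        intro r
        rw [show (-(x + y) * r⁻¹ : κ) = (-1) * (x + y) * r⁻¹ by ring, map_mul, map_mul,
          MulChar.inv_apply' lam r]
        ring
      rw [Finset.sum_congr rfl fun r _ => hlam r, ← Finset.mul_sum]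
      have : (∑ r : κ, lam⁻¹ r * ψ r) = -(g ψ lam⁻¹) := by rw [g, neg_neg]
      rw [this]
      ring
    rw [swap3]
    have hpoch : ∀ lam : MulChar κ ℂ, lam (-1) * g ψ lam⁻¹ = (pochc ψ 1 lam)⁻¹ :=
      fun lam => (inv_pochc ψ hψ lam).symm
    simp only [hpoch]
    rw [F21, Finset.mul_sum, Finset.mul_sum, Finset.mul_sum]
    refine Finset.sum_congr rfl fun lam _ => ?_
    rw [hf]
    simp only
    have hb1 : pochc ψ β lam ≠ 0 := pochc_one_ne_zero ψ hψ β lam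
    have hb2 : pochc ψ 1 lam ≠ 0 := pochc_one_ne_zero ψ hψ 1 lam
    have h1q : ((1 : ℂ) - (Fintype.card κ : ℂ)) ≠ 0 := homq
    rw [← hqdef] at h1q ⊢
    field_simp
    ring
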